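/- For every n ≥ 1, the bottom-to-random-with-standardisation chain on S_n lumps strongly via the descent composition map: for all σ₁, σ₂ ∈ S_n with the same descent composition, and every composition c of n, Σ_{τ : DesComp(τ)=c} K_std(σ₁,τ) = Σ_{τ : DesComp(τ)=c} K_std(σ₂,τ). -/

import Mathlib

/-- The one-line notation word of a permutation `σ ∈ S_n`, as the list
`(σ(1), …, σ(n))` of letters in `{1, …, n}`. -/
def word (n : ℕ) (σ : Equiv.Perm (Fin n)) : List ℕ :=
  List.ofFn fun p => (σ p : ℕ) + 1

/-- The bottom-to-random-with-standardisation transition matrix on `S_n`: from `σ`,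
delete the last letter `i`, relabel every remaining letter `j > i` as `j - 1`, and insert
the letter `n` so that it becomes the `k`-th letter; `K_std σ τ` is `1/n` times the
number of `k ∈ {1, …, n}` for which the result is the word of `τ`. -/
noncomputable def Kstd (n : ℕ) : Matrix (Equiv.Perm (Fin n)) (Equiv.Perm (Fin n)) ℝ :=
  fun σ τ =>
    ((Finset.univ.filter fun k : Fin n =>
      ((word n σ).dropLast.map fun j =>
          if (word n σ).getLastD 0 < j then j - 1 else j).insertIdx (k : ℕ) n
        = word n τ).card : ℝ) / n

/-- The descent set of `σ ∈ S_n`: the positions `i ∈ {1, …, n-1}` (in 1-based indexing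
of the one-line word) with `σ(i) > σ(i+1)`. -/
def descents (n : ℕ) (σ : Equiv.Perm (Fin n)) : Finset ℕ :=
  (Finset.Icc 1 (n - 1)).filter fun i => (word n σ).getD i 0 < (word n σ).getD (i - 1) 0

/-- The descent composition of `σ ∈ S_n`: the composition `(c₁, …, c_k)` of `n` whose
partial sums `c₁, c₁+c₂, …, c₁+⋯+c_{k-1}` are exactly the descents of `σ`. -/
def desComp (n : ℕ) (σ : Equiv.Perm (Fin n)) : List ℕ :=
  let d := ((descents n σ).sort (· ≤ ·)) ++ [n]
  List.zipWith (· - ·) d (0 :: d)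

namespace BTR

variable {n : ℕ}

lemma word_length (σ : Equiv.Perm (Fin n)) : (word n σ).length = n := by
  simp [word]

lemma word_getElem (σ : Equiv.Perm (Fin n)) (i : ℕ) (h : i < n) :
    (word n σ)[i]'(by simp [word_length, h]) = (σ ⟨i, h⟩ : ℕ) + 1 := by
  simp [word]

lemma mem_word {σ : Equiv.Perm (Fin n)} {a : ℕ} : a ∈ word n σ ↔ 1 ≤ a ∧ a ≤ n := by
  constructor
  · intro ha
    simp only [word, List.mem_ofFn, Set.mem_range] at ha
    obtain ⟨p, hp⟩ := ha
    have := p.2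
    have := (σ p).2
    omega
  · intro ⟨h1, h2⟩
    simp only [word, List.mem_ofFn, Set.mem_range]
    refine ⟨σ.symm ⟨a - 1, by omega⟩, ?_⟩
    simp; omega

lemma word_nodup (σ : Equiv.Perm (Fin n)) : (word n σ).Nodup := by
  refine List.nodup_ofFn.2 ?_
  intro a b hab
  simp only at hab
  exact σ.injective (Fin.ext (by omega))

lemma word_injective : Function.Injective (word n) := by
  intro σ τ h
  ext p
  have := congrArg (fun l : List ℕ => l.getD (p : ℕ) 0) h
  simp only [word] at this
  rw [List.getD_eq_getElem _ _ (by simp [p.2]), List.getD_eq_getElem _ _ (by simp [p.2])] at this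
  simp only [List.getElem_ofFn, Fin.eta] at this
  omega

lemma exists_perm_of_list (l : List ℕ) (hlen : l.length = n) (hnd : l.Nodup)
    (hmem : ∀ a ∈ l, 1 ≤ a ∧ a ≤ n) : ∃ τ : Equiv.Perm (Fin n), word n τ = l := by
  have hget : ∀ p : Fin n, 1 ≤ l[(p:ℕ)]'(by rw [hlen]; exact p.2) ∧ l[(p:ℕ)]'(by rw [hlen]; exact p.2) ≤ n := by
    intro p; exact hmem _ (List.getElem_mem _)
  let f : Fin n → Fin n := fun p => ⟨l[(p:ℕ)]'(by rw [hlen]; exact p.2) - 1, by have := hget p; omega⟩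
  have hinj : Function.Injective f := by
    intro p q hpq
    have h1 := hget p; have h2 := hget q
    have : l[(p:ℕ)]'(by rw [hlen]; exact p.2) = l[(q:ℕ)]'(by omega) := by
      have := congrArg (fun x : Fin n => (x:ℕ)) hpq
      simp only [f] at this; omega
    have := (List.Nodup.getElem_inj_iff hnd).1 this
    exact Fin.ext this
  refine ⟨(Equiv.ofBijective f (Finite.injective_iff_bijective.1 hinj)).symm.symm, ?_⟩
  apply List.ext_getElem (by simp [word_length, hlen])
  intro i h1 h2
  have hi : i < n := by simpa [word_length] using h1
  rw [word_getElem _ i hi]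
  show (f ⟨i, hi⟩ : ℕ) + 1 = _
  have h1i := hmem _ (List.getElem_mem h2)
  show l[i]'h2 - 1 + 1 = l[i]'h2
  omega

end BTR

namespace BTR

variable {n : ℕ}



def stdword (n : ℕ) (σ : Equiv.Perm (Fin n)) : List ℕ :=
  (word n σ).dropLast.map fun j => if (word n σ).getLastD 0 < j then j - 1 else j

variable (hn : 1 ≤ n) (σ : Equiv.Perm (Fin n))
include hn

lemma word_ne_nil : word n σ ≠ [] := by
  intro h
  have h2 := word_length σ
  rw [h] at h2
  simp only [List.length_nil] at h2
  omega

lemma getLastD_word : (word n σ).getLastD 0 = (word n σ).getLast (word_ne_nil hn σ) := by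
  rw [List.getLastD_eq_getLast?, List.getLast?_eq_getLast (word_ne_nil hn σ)]
  rfl

lemma word_eq_dropLast_append :
    word n σ = (word n σ).dropLast ++ [(word n σ).getLastD 0] := by
  rw [getLastD_word hn σ, List.dropLast_append_getLast]

lemma last_mem : (word n σ).getLastD 0 ∈ word n σ := by
  rw [getLastD_word hn σ]
  exact List.getLast_mem _

lemma last_bounds : 1 ≤ (word n σ).getLastD 0 ∧ (word n σ).getLastD 0 ≤ n :=
  mem_word.1 (last_mem hn σ)

lemma last_not_mem_dropLast : (word n σ).getLastD 0 ∉ (word n σ).dropLast := by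
  have h := word_nodup σ
  rw [word_eq_dropLast_append hn σ] at h
  exact fun hm => (List.nodup_append.1 h).2.2 _ hm _ (List.mem_singleton_self _) rfl

lemma mem_dropLast {a : ℕ} :
    a ∈ (word n σ).dropLast ↔ 1 ≤ a ∧ a ≤ n ∧ a ≠ (word n σ).getLastD 0 := by
  constructor
  · intro h
    have h1 : a ∈ word n σ := List.mem_of_mem_dropLast h
    have h2 := mem_word.1 h1
    refine ⟨h2.1, h2.2, ?_⟩
    rintro rfl
    exact last_not_mem_dropLast hn σ h
  · rintro ⟨h1, h2, h3⟩
    have : a ∈ word n σ := mem_word.2 ⟨h1, h2⟩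
    rw [word_eq_dropLast_append hn σ] at this
    simp only [List.mem_append, List.mem_singleton] at this
    tauto

omit hn in
lemma stdword_length : (stdword n σ).length = n - 1 := by
  simp [stdword, List.length_dropLast, word_length]

lemma mem_stdword {a : ℕ} : a ∈ stdword n σ ↔ 1 ≤ a ∧ a ≤ n - 1 := by
  set i := (word n σ).getLastD 0 with hi
  have hib := last_bounds hn σ
  simp only [stdword, List.mem_map, ← hi]
  constructor
  · rintro ⟨b, hb, rfl⟩
    have := (mem_dropLast hn σ).1 hb
    rw [← hi] at this
    split <;> omega
  · intro ⟨h1, h2⟩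
    by_cases hai : a < i
    · exact ⟨a, (mem_dropLast hn σ).2 ⟨h1, by omega, by omega⟩, by rw [if_neg (by omega)]⟩
    · exact ⟨a + 1, (mem_dropLast hn σ).2 ⟨by omega, by omega, by omega⟩,
        by rw [if_pos (by omega)]; omega⟩

lemma stdword_nodup : (stdword n σ).Nodup := by
  have hd : ((word n σ).dropLast).Nodup :=
    (word_nodup σ).sublist (List.dropLast_sublist _)
  refine List.Nodup.map_on ?_ hd
  intro x hx y hy hxy
  have hxm := (mem_dropLast hn σ).1 hx
  have hym := (mem_dropLast hn σ).1 hy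
  split at hxy <;> split at hxy <;> omega

lemma exists_wk (k : ℕ) (hk : k ≤ n - 1) :
    (((stdword n σ).insertIdx k n).length = n) ∧ ((stdword n σ).insertIdx k n).Nodup ∧
      ∀ a ∈ (stdword n σ).insertIdx k n, 1 ≤ a ∧ a ≤ n := by
  have hk' : k ≤ (stdword n σ).length := by rw [stdword_length σ]; exact hk
  have hperm := List.perm_insertIdx n (stdword n σ) hk'
  refine ⟨?_, ?_, ?_⟩
  · rw [List.length_insertIdx, if_pos hk', stdword_length σ]; omega
  · refine hperm.nodup_iff.2 (List.nodup_cons.2 ⟨?_, stdword_nodup hn σ⟩)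
    intro h; have := (mem_stdword hn σ).1 h; omega
  · intro a ha
    have := hperm.mem_iff.1 ha
    simp only [List.mem_cons] at this
    rcases this with rfl | h
    · omega
    · have := (mem_stdword hn σ).1 h; omega

end BTR

namespace BTR

variable {n : ℕ}

def compOf (n : ℕ) (D : Finset ℕ) : List ℕ :=
  let d := (D.sort (· ≤ ·)) ++ [n]
  List.zipWith (· - ·) d (0 :: d)

lemma zip_recover : ∀ (l₁ : List ℕ) (a : ℕ) (l₂ : List ℕ),
    (a :: l₁).Chain' (· < ·) → (a :: l₂).Chain' (· < ·) →
    List.zipWith (· - ·) l₁ (a :: l₁) = List.zipWith (· - ·) l₂ (a :: l₂) → l₁ = l₂ := by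
  intro l₁
  induction l₁ with
  | nil =>
    intro a l₂ _ _ h
    cases l₂ with
    | nil => rfl
    | cons h₂ t₂ => rw [List.zipWith_cons_cons] at h; simp at h
  | cons h₁ t₁ ih =>
    intro a l₂ hc1 hc2 h
    cases l₂ with
    | nil => rw [List.zipWith_cons_cons] at h; simp at h
    | cons h₂ t₂ =>
      rw [List.zipWith_cons_cons, List.zipWith_cons_cons] at h
      injection h with hh ht
      have ha1 : a < h₁ := (List.isChain_cons_cons.1 hc1).1
      have ha2 : a < h₂ := (List.isChain_cons_cons.1 hc2).1
      have hh' : h₁ = h₂ := by omega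
      subst hh'
      rw [ih h₁ t₂ hc1.tail hc2.tail ht]

lemma compOf_inj (hn : 1 ≤ n) (D₁ D₂ : Finset ℕ)
    (h1 : D₁ ⊆ Finset.Icc 1 (n - 1)) (h2 : D₂ ⊆ Finset.Icc 1 (n - 1))
    (h : compOf n D₁ = compOf n D₂) : D₁ = D₂ := by
  have key : ∀ D : Finset ℕ, D ⊆ Finset.Icc 1 (n - 1) →
      (0 :: (D.sort (· ≤ ·) ++ [n])).Chain' (· < ·) := by
    intro D hD
    refine List.isChain_iff_pairwise.2 ?_
    have hmem : ∀ x ∈ D.sort (· ≤ ·), 1 ≤ x ∧ x ≤ n - 1 := by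
      intro x hx
      have := hD (Finset.mem_sort (α := ℕ) (· ≤ ·) |>.1 hx)
      simpa using this
    refine List.pairwise_cons.2 ⟨?_, ?_⟩
    · intro y hy
      rcases List.mem_append.1 hy with hy | hy
      · have := hmem y hy; omega
      · simp only [List.mem_singleton] at hy; omega
    · refine List.pairwise_append.2 ⟨(Finset.sortedLT_sort D).pairwise, List.pairwise_singleton _ _, ?_⟩
      intro x hx y hy
      simp only [List.mem_singleton] at hy
      have := hmem x hx
      omega
  have := zip_recover _ 0 _ (key D₁ h1) (key D₂ h2) h
  have hsort : D₁.sort (· ≤ ·) = D₂.sort (· ≤ ·) := by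
    have := List.append_cancel_right this
    exact this
  have := congrArg List.toFinset hsort
  rwa [Finset.sort_toFinset, Finset.sort_toFinset] at this

def listDescents (n : ℕ) (w : List ℕ) : Finset ℕ :=
  (Finset.Icc 1 (n - 1)).filter fun i => w.getD i 0 < w.getD (i - 1) 0

-- getD of insertIdx
lemma getD_ins_lt (w : List ℕ) (x k j : ℕ) (hjk : j < k) (hj : j < w.length) (hk : k ≤ w.length) :
    (w.insertIdx k x).getD j 0 = w.getD j 0 := by
  rw [List.getD_eq_getElem _ _ (by rw [List.length_insertIdx, if_pos hk]; omega),
    List.getD_eq_getElem _ _ hj]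
  exact List.getElem_insertIdx_of_lt hjk (by rw [List.length_insertIdx, if_pos hk]; omega)

lemma getD_ins_self (w : List ℕ) (x k : ℕ) (hk : k ≤ w.length) :
    (w.insertIdx k x).getD k 0 = x := by
  rw [List.getD_eq_getElem _ _ (by rw [List.length_insertIdx, if_pos hk]; omega)]
  exact List.getElem_insertIdx_self (by rw [List.length_insertIdx, if_pos hk]; omega)

lemma getD_ins_gt (w : List ℕ) (x k j : ℕ) (hjk : k < j) (hj : j < w.length + 1) :
    (w.insertIdx k x).getD j 0 = w.getD (j - 1) 0 := by
  have hk : k ≤ w.length := by omega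
  rw [List.getD_eq_getElem _ _ (by rw [List.length_insertIdx, if_pos hk]; omega),
    List.getD_eq_getElem _ _ (by omega)]
  have hj' : j = k + (j - k - 1) + 1 := by omega
  have h2 : k + (j - k - 1) < w.length := by omega
  have := List.getElem_insertIdx_of_gt (l := w) (x := x) hjk (by rw [List.length_insertIdx, if_pos hk]; omega)
  convert this using 2 <;> omega

lemma getD_mem_le (w : List ℕ) (j m : ℕ) (hj : j < w.length) (hb : ∀ a ∈ w, a ≤ m) :
    w.getD j 0 ≤ m := by
  rw [List.getD_eq_getElem _ _ hj]
  exact hb _ (List.getElem_mem _)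

lemma listDescents_insertIdx_congr (w₁ w₂ : List ℕ)
    (h1 : w₁.length = n - 1) (h2 : w₂.length = n - 1)
    (hb1 : ∀ a ∈ w₁, a ≤ n - 1) (hb2 : ∀ a ∈ w₂, a ≤ n - 1)
    (hdsc : ∀ j, 1 ≤ j → j ≤ n - 2 →
      (w₁.getD j 0 < w₁.getD (j - 1) 0 ↔ w₂.getD j 0 < w₂.getD (j - 1) 0))
    (k : ℕ) (hk : k ≤ n - 1) :
    listDescents n (w₁.insertIdx k n) = listDescents n (w₂.insertIdx k n) := by
  unfold listDescents
  apply Finset.filter_congr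
  intro i hi
  simp only [Finset.mem_Icc] at hi
  obtain ⟨hi1, hi2⟩ := hi
  have hn2 : 2 ≤ n := by omega
  have hk1 : k ≤ w₁.length := by omega
  have hk2 : k ≤ w₂.length := by omega
  rcases lt_trichotomy i k with hik | hik | hik
  · -- i < k : both positions below k
    rw [getD_ins_lt w₁ n k i hik (by omega) hk1, getD_ins_lt w₁ n k (i-1) (by omega) (by omega) hk1,
        getD_ins_lt w₂ n k i hik (by omega) hk2, getD_ins_lt w₂ n k (i-1) (by omega) (by omega) hk2]
    exact hdsc i hi1 (by omega)
  · -- i = k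
    subst hik
    rw [getD_ins_self w₁ n i hk1, getD_ins_self w₂ n i hk2,
        getD_ins_lt w₁ n i (i-1) (by omega) (by omega) hk1,
        getD_ins_lt w₂ n i (i-1) (by omega) (by omega) hk2]
    have b1 := getD_mem_le w₁ (i-1) (n-1) (by omega) hb1
    have b2 := getD_mem_le w₂ (i-1) (n-1) (by omega) hb2
    constructor <;> intro h <;> omega
  · rcases Nat.eq_or_lt_of_le (Nat.succ_le_of_lt hik) with hik1 | hik1
    · -- i = k + 1
      rw [getD_ins_gt w₁ n k i hik (by omega), getD_ins_gt w₂ n k i hik (by omega)]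
      have hi1k : i - 1 = k := by omega
      rw [hi1k, getD_ins_self w₁ n k hk1, getD_ins_self w₂ n k hk2]
      have b1 := getD_mem_le w₁ k (n-1) (by omega) hb1
      have b2 := getD_mem_le w₂ k (n-1) (by omega) hb2
      constructor <;> intro h <;> omega
    · -- i > k + 1
      rw [getD_ins_gt w₁ n k i hik (by omega), getD_ins_gt w₂ n k i hik (by omega),
          getD_ins_gt w₁ n k (i-1) (by omega) (by omega),
          getD_ins_gt w₂ n k (i-1) (by omega) (by omega)]
      have : i - 1 - 1 = i - 2 := by omega
      rw [this]
      have := hdsc (i-1) (by omega) (by omega)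
      have h12 : i - 1 - 1 = i - 2 := by omega
      rw [h12] at this
      exact this

end BTR

namespace BTR
variable {n : ℕ}

lemma stdword_getD (hn : 1 ≤ n) (σ : Equiv.Perm (Fin n)) (j : ℕ) (hj : j < n - 1) :
    (stdword n σ).getD j 0 =
      if (word n σ).getLastD 0 < (word n σ).getD j 0 then (word n σ).getD j 0 - 1
      else (word n σ).getD j 0 := by
  have hw : (word n σ).length = n := word_length σ
  have hd : (word n σ).dropLast.length = n - 1 := by
    rw [List.length_dropLast, hw]
  rw [List.getD_eq_getElem _ _ (by rw [stdword_length σ]; omega)]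
  rw [List.getD_eq_getElem _ _ (by omega)]
  simp only [stdword, List.getElem_map, List.getElem_dropLast]

lemma word_getD_mem_dropLast (hn : 1 ≤ n) (σ : Equiv.Perm (Fin n)) (j : ℕ) (hj : j < n - 1) :
    (word n σ).getD j 0 ∈ (word n σ).dropLast := by
  have hw : (word n σ).length = n := word_length σ
  rw [List.getD_eq_getElem _ _ (by omega), ← List.getElem_dropLast (xs := word n σ) (i := j)
    (by rw [List.length_dropLast, hw]; omega)]
  exact List.getElem_mem _

lemma stdword_dsc (hn : 1 ≤ n) (σ : Equiv.Perm (Fin n)) (j : ℕ) (hj1 : 1 ≤ j) (hj2 : j ≤ n - 2) :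
    ((stdword n σ).getD j 0 < (stdword n σ).getD (j - 1) 0 ↔
      (word n σ).getD j 0 < (word n σ).getD (j - 1) 0) := by
  have hn3 : 3 ≤ n := by omega
  rw [stdword_getD hn σ j (by omega), stdword_getD hn σ (j - 1) (by omega)]
  have ha := (mem_dropLast hn σ).1 (word_getD_mem_dropLast hn σ j (by omega))
  have hb := (mem_dropLast hn σ).1 (word_getD_mem_dropLast hn σ (j - 1) (by omega))
  have hi := last_bounds hn σ
  split <;> split <;> omega

lemma descents_sub (σ : Equiv.Perm (Fin n)) : descents n σ ⊆ Finset.Icc 1 (n - 1) :=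
  Finset.filter_subset _ _

lemma desComp_eq (σ : Equiv.Perm (Fin n)) : desComp n σ = compOf n (descents n σ) := rfl

lemma descents_eq_of_desComp (hn : 1 ≤ n) {σ₁ σ₂ : Equiv.Perm (Fin n)}
    (h : desComp n σ₁ = desComp n σ₂) : descents n σ₁ = descents n σ₂ :=
  compOf_inj hn _ _ (descents_sub σ₁) (descents_sub σ₂) h

lemma dsc_iff_mem (σ : Equiv.Perm (Fin n)) (j : ℕ) (hj1 : 1 ≤ j) (hj2 : j ≤ n - 1) :
    ((word n σ).getD j 0 < (word n σ).getD (j - 1) 0) ↔ j ∈ descents n σ := by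
  simp [descents, Finset.mem_filter, Finset.mem_Icc, hj1, hj2]

lemma key_congr (hn : 1 ≤ n) (σ₁ σ₂ : Equiv.Perm (Fin n))
    (hd : descents n σ₁ = descents n σ₂) (k : ℕ) (hk : k ≤ n - 1) :
    listDescents n ((stdword n σ₁).insertIdx k n) =
      listDescents n ((stdword n σ₂).insertIdx k n) := by
  apply listDescents_insertIdx_congr _ _ (stdword_length σ₁) (stdword_length σ₂)
    (fun a ha => ((mem_stdword hn σ₁).1 ha).2) (fun a ha => ((mem_stdword hn σ₂).1 ha).2)
    _ k hk
  intro j hj1 hj2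
  rw [stdword_dsc hn σ₁ j hj1 hj2, stdword_dsc hn σ₂ j hj1 hj2,
    dsc_iff_mem σ₁ j hj1 (by omega), dsc_iff_mem σ₂ j hj1 (by omega), hd]

lemma sum_formula (hn : 1 ≤ n) (σ : Equiv.Perm (Fin n)) (c : List ℕ) :
    ∑ τ ∈ Finset.univ.filter (fun τ => desComp n τ = c), Kstd n σ τ
      = ((Finset.univ.filter (fun k : Fin n =>
          compOf n (listDescents n ((stdword n σ).insertIdx (k : ℕ) n)) = c)).card : ℝ) / n := by
  have hK : ∀ τ, Kstd n σ τ = ((Finset.univ.filter fun k : Fin n =>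
      (stdword n σ).insertIdx (k : ℕ) n = word n τ).card : ℝ) / n := fun τ => rfl
  simp_rw [hK]
  rw [← Finset.sum_div]
  congr 1
  rw [← Nat.cast_sum]
  congr 1
  simp_rw [Finset.card_filter]
  rw [Finset.sum_comm]
  apply Finset.sum_congr rfl
  intro k _
  have hkle : (k : ℕ) ≤ n - 1 := by have := k.2; omega
  obtain ⟨hlen, hnd, hmem⟩ := exists_wk hn σ (k : ℕ) hkle
  obtain ⟨τk, hτk⟩ := exists_perm_of_list _ hlen hnd hmem
  have hcond : ∀ τ : Equiv.Perm (Fin n),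
      ((stdword n σ).insertIdx (k : ℕ) n = word n τ) ↔ τ = τk := by
    intro τ
    constructor
    · intro h
      exact word_injective ((hτk.trans h).symm)
    · rintro rfl
      exact hτk.symm
  simp_rw [hcond]
  rw [Finset.sum_ite_eq' _ τk (fun _ => 1)]
  have : τk ∈ Finset.univ.filter (fun τ => desComp n τ = c) ↔
      compOf n (listDescents n ((stdword n σ).insertIdx (k : ℕ) n)) = c := by
    rw [Finset.mem_filter]
    have : desComp n τk = compOf n (listDescents n ((stdword n σ).insertIdx (k : ℕ) n)) := by
      rw [desComp_eq]
      congr 1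
      show listDescents n (word n τk) = _
      rw [hτk]
    simp [this]
  simp only [this]

end BTR

open Finset in
/-- **Strong lumping of the bottom-to-random-with-standardisation chain by descent
composition.** For all `σ₁, σ₂ ∈ S_n` with the same descent composition, and every
composition `c` of `n`, the total transition probability into the set of permutations
with descent composition `c` is the same from `σ₁` as from `σ₂`. -/
theorem bottom_to_random_with_std_lumps_by_descent_composition
    (n : ℕ) (hn : 1 ≤ n) (σ₁ σ₂ : Equiv.Perm (Fin n))
    (hdes : desComp n σ₁ = desComp n σ₂)
    (c : List ℕ) (hc : c.sum = n) (hcpos : ∀ x ∈ c, 0 < x) :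
    ∑ τ ∈ univ.filter (fun τ => desComp n τ = c), Kstd n σ₁ τ
      = ∑ τ ∈ univ.filter (fun τ => desComp n τ = c), Kstd n σ₂ τ := by
  rw [BTR.sum_formula hn σ₁ c, BTR.sum_formula hn σ₂ c]
  have hd := BTR.descents_eq_of_desComp hn hdes
  congr 2
  congr 1
  apply Finset.filter_congr
  intro k _
  rw [BTR.key_congr hn σ₁ σ₂ hd (k : ℕ) (by have := k.2; omega)]
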